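/- Two phylogenetic trees T and T' on X display the same quartet system, Q(T) = Q(T'), if and only if there is a graph isomorphism from T to T' fixing every element of X; in particular, a phylogenetic tree on X is uniquely determined (up to isomorphism fixing X) by the set of all quartets it displays. -/

import Mathlib

namespace PhyloPaper

variable {V X M : Type}

/-- The degree of a vertex: the number of its neighbors. -/
noncomputable def deg (G : SimpleGraph V) (v : V) : ℕ := (G.neighborSet v).ncard

/-- `v` lies on the (unique, in a tree) path between `x` and `y`. -/
def OnPath (G : SimpleGraph V) (x y v : V) : Prop :=
  ∀ p : G.Walk x y, p.IsPath → v ∈ p.support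

/-- `m` is a median of `x, y, z`: it lies on all three pairwise paths. -/
def IsMedian (G : SimpleGraph V) (x y z m : V) : Prop :=
  OnPath G x y m ∧ OnPath G y z m ∧ OnPath G x z m

/-- An (unrooted) phylogenetic tree on `X`: a tree whose leaf set is (the image of) `X`
and which has no vertex of degree 2. -/
structure IsPhyloTree (G : SimpleGraph V) (leaf : X → V) : Prop where
  isTree : G.IsTree
  leaf_inj : Function.Injective leaf
  leaf_iff : ∀ v : V, (∃ x : X, leaf x = v) ↔ deg G v = 1
  no_deg_two : ∀ v : V, deg G v ≠ 2

/-- A phylogenetic tree is binary if every interior vertex (degree ≥ 2) has degree 3. -/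
def IsBinary (G : SimpleGraph V) : Prop := ∀ v : V, 2 ≤ deg G v → deg G v = 3

/-- A symbolic dating map sends every leaf to `⊙` (modelled as `none`). -/
def IsDatingMap (leaf : X → V) (t : V → Option M) : Prop := ∀ x : X, t (leaf x) = none

/-- A dating map is discriminating if adjacent vertices get different values. -/
def Discriminating (G : SimpleGraph V) (t : V → Option M) : Prop :=
  ∀ u v : V, G.Adj u v → t u ≠ t v

/-- `δ` is the ternary map induced by the dated tree `(G, leaf, t)`:
`δ x y z = t (med (leaf x) (leaf y) (leaf z))`. -/
def InducedDelta (G : SimpleGraph V) (leaf : X → V) (t : V → Option M)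
    (δ : X → X → X → Option M) : Prop :=
  ∀ x y z : X, ∃ m : V, IsMedian G (leaf x) (leaf y) (leaf z) m ∧ δ x y z = t m

/-- The (well-defined, for symmetric `δ`) value of `δ` on a 3-element subset `T` is `a`. -/
def ValOn (δ : X → X → X → Option M) [DecidableEq X] (T : Finset X) (a : Option M) : Prop :=
  ∃ x y z : X, x ≠ y ∧ x ≠ z ∧ y ≠ z ∧ T = {x, y, z} ∧ δ x y z = a

/-- `S` is `n`-`m` partitioned by `δ`: `δ` takes exactly two values on the 3-element
subsets of `S`, one value on exactly `n` of them and the other on exactly `m` of them. -/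
def Partitioned [DecidableEq X] (δ : X → X → X → Option M) (S : Finset X) (n m : ℕ) : Prop :=
  ∃ a b : Option M, a ≠ b ∧
    {T : Finset X | T ∈ S.powersetCard 3 ∧ ValOn δ T a}.ncard = n ∧
    {T : Finset X | T ∈ S.powersetCard 3 ∧ ValOn δ T b}.ncard = m ∧
    ∀ T ∈ S.powersetCard 3, ValOn δ T a ∨ ValOn δ T b

/-- Condition (1): `δ` is symmetric under all permutations of its arguments. -/
def Symm3 (δ : X → X → X → Option M) : Prop :=
  ∀ x y z : X, δ x y z = δ y x z ∧ δ x y z = δ x z y ∧ δ x y z = δ z y x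

/-- Condition (2): `δ x y z = ⊙` iff `x, y, z` are not pairwise distinct. -/
def VanishCond (δ : X → X → X → Option M) : Prop :=
  ∀ x y z : X, δ x y z = none ↔ (x = y ∨ y = z ∨ x = z)

/-- `a, b, c, d` are pairwise distinct. -/
def P4 (a b c d : X) : Prop := a ≠ b ∧ a ≠ c ∧ a ≠ d ∧ b ≠ c ∧ b ≠ d ∧ c ≠ d

/-- `a, b, c, d, e` are pairwise distinct. -/
def P5 (a b c d e : X) : Prop := P4 a b c d ∧ a ≠ e ∧ b ≠ e ∧ c ≠ e ∧ d ≠ e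

/-- Condition (3): on four distinct taxa `δ` takes at most 2 values, and if exactly 2,
then the 4-set is 2-2 partitioned. -/
def FourPointCond [DecidableEq X] (δ : X → X → X → Option M) : Prop :=
  ∀ x y z u : X, P4 x y z u →
    ({δ x y z, δ x y u, δ x z u, δ y z u} : Set (Option M)).ncard ≤ 2 ∧
    (({δ x y z, δ x y u, δ x z u, δ y z u} : Set (Option M)).ncard = 2 →
      Partitioned δ ({x, y, z, u} : Finset X) 2 2)

/-- Condition (4): no 5-element subset of `X` is 5-5 partitioned by `δ`. -/
def FivePointCond [DecidableEq X] (δ : X → X → X → Option M) : Prop :=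
  ∀ S : Finset X, S.card = 5 → ¬ Partitioned δ S 5 5

/-- A symbolic ternary metric. -/
def IsSymbolicTernaryMetric [DecidableEq X] (δ : X → X → X → Option M) : Prop :=
  Symm3 δ ∧ VanishCond δ ∧ FourPointCond δ ∧ FivePointCond δ

/-- Condition (*): `δ` is fully resolved. -/
def FullyResolved [DecidableEq X] (δ : X → X → X → Option M) : Prop :=
  ∀ x y z u : X, P4 x y z u →
    ({δ x y z, δ x y u, δ x z u, δ y z u} : Set (Option M)).ncard = 1 →
    ∃ e : X, Partitioned δ ({x, y, z, u, e} : Finset X) 4 6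

/-- The tree displays the quartet `ab|cd`: the path from `a` to `b` is
vertex-disjoint from the path from `c` to `d`. -/
def Displays (G : SimpleGraph V) (leaf : X → V) (a b c d : X) : Prop :=
  ∃ p : G.Walk (leaf a) (leaf b), p.IsPath ∧
    ∃ q : G.Walk (leaf c) (leaf d), q.IsPath ∧ ∀ v : V, v ∈ p.support → v ∉ q.support

/-- `Q a b c d` represents membership of the quartet `ab|cd`; a quartet system must be
invariant under the symmetries of quartets and only contain genuine quartets. -/
def IsQuartetSystem (Q : X → X → X → X → Prop) : Prop :=
  ∀ a b c d : X, (Q a b c d → P4 a b c d) ∧ (Q a b c d ↔ Q b a c d) ∧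
    (Q a b c d ↔ Q a b d c) ∧ (Q a b c d ↔ Q c d a b)

/-- Thin: at most one of the three quartets on any 4 taxa. -/
def Thin (Q : X → X → X → X → Prop) : Prop :=
  ∀ a b c d : X, P4 a b c d →
    ¬(Q a b c d ∧ Q a c b d) ∧ ¬(Q a b c d ∧ Q a d b c) ∧ ¬(Q a c b d ∧ Q a d b c)

/-- Transitive quartet system. -/
def TransitiveQ (Q : X → X → X → X → Prop) : Prop :=
  ∀ a b c d e : X, P5 a b c d e → Q a b c e → Q a b d e → Q a b c d

/-- Saturated quartet system. -/
def SaturatedQ (Q : X → X → X → X → Prop) : Prop :=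
  ∀ a b c d e : X, P5 a b c d e → Q a b c d → (Q a e c d ∨ Q a b c e)

/-- Complete: exactly one of the three quartets on any 4 distinct taxa. -/
def CompleteQ (Q : X → X → X → X → Prop) : Prop :=
  ∀ a b c d : X, P4 a b c d →
    (Q a b c d ∨ Q a c b d ∨ Q a d b c) ∧
    ¬(Q a b c d ∧ Q a c b d) ∧ ¬(Q a b c d ∧ Q a d b c) ∧ ¬(Q a c b d ∧ Q a d b c)

/-- `δ` generates the quartet `xy|zu`. -/
def Generates (δ : X → X → X → Option M) (x y z u : X) : Prop :=
  P4 x y z u ∧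
  ((δ x z u = δ y z u ∧ δ y z u ≠ δ x y z ∧ δ x y z = δ x y u) ∨
   (δ x y z = δ x y u ∧ δ x y u = δ x z u ∧ δ x z u = δ y z u ∧
    ∃ e : X, δ x y e = δ x y z ∧ δ z u e = δ x y z ∧
      δ x u e ≠ δ x y z ∧ δ x u e = δ x z e ∧ δ x z e = δ y z e ∧ δ y z e = δ y u e))

/-- A rooted phylogenetic tree on `X` with root `ρ`: a tree whose leaves (in the rooted
sense: out-degree 0, i.e. non-root vertices of degree 1) are exactly the image of `X`,
and with no non-root vertex of in-degree one and out-degree one (i.e. degree 2). -/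
structure IsRootedPhyloTree (G : SimpleGraph V) (ρ : V) (leaf : X → V) : Prop where
  isTree : G.IsTree
  leaf_inj : Function.Injective leaf
  leaf_iff : ∀ v : V, (∃ x : X, leaf x = v) ↔ (v ≠ ρ ∧ deg G v = 1)
  no_in_out_deg_one : ∀ v : V, v ≠ ρ → deg G v ≠ 2

/-- `d` is the binary map induced by the rooted dated tree:
`d x y = t (lca x y)`, where the last common ancestor is the median of `ρ, x, y`. -/
def InducedD (G : SimpleGraph V) (ρ : V) (leaf : X → V) (t : V → Option M)
    (d : X → X → Option M) : Prop :=
  ∀ x y : X, ∃ m : V, IsMedian G ρ (leaf x) (leaf y) m ∧ d x y = t m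

/-- Symbolic ultrametric: conditions (U1)-(U4). -/
def IsSymbolicUltrametric (d : X → X → Option M) : Prop :=
  (∀ x y : X, d x y = none ↔ x = y) ∧
  (∀ x y : X, d x y = d y x) ∧
  (∀ x y z : X, ({d x y, d x z, d y z} : Set (Option M)).ncard ≤ 2) ∧
  ¬ ∃ x y u v : X, P4 x y u v ∧ d x y = d y u ∧ d y u = d u v ∧
      d u v ≠ d y v ∧ d y v = d x v ∧ d x v = d x u

/-- `x` and `y` are `m`-equivalent with respect to `δ`. -/
def MEquiv (δ : X → X → X → Option M) (m : Option M) (x y : X) : Prop :=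
  (∃ z : X, δ x y z = m) ∧
  ∀ u v : X, u ≠ x → u ≠ y → v ≠ x → v ≠ y → (δ x u v = m ↔ δ y u v = m)

/-- `x ∼_δ y`: `x` and `y` are `m`-equivalent for some `m`. -/
def DeltaEquiv (δ : X → X → X → Option M) (x y : X) : Prop :=
  ∃ m : Option M, MEquiv δ m x y

/-- `C` is a pseudo-cherry of the tree: `C` has at least 2 elements and is exactly the
set of leaves adjacent to some interior vertex `v`. -/
def IsPseudoCherry (G : SimpleGraph V) (leaf : X → V) (C : Set X) : Prop :=
  2 ≤ C.ncard ∧ ∃ v : V, 2 ≤ deg G v ∧ C = {x : X | G.Adj (leaf x) v}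

/-!
Every vertex of a phylogenetic tree is the median of three leaves, and for leaves `a, b, c, d`
the medians of `a, b, c` and of `a, b, d` coincide iff neither `ac|bd` nor `ad|bc` is displayed.
At an interior vertex `v`, the median of three leaves is `v` iff they lie in three different
branches at `v`, and any two such triples are linked by replacing one leaf at a time; hence
equalities between medians of arbitrary leaf triples are the same in two trees with the same
quartets, and sending the median of `a, b, c` in one tree to their median in the other is a
well-defined bijection fixing the leaves. It preserves adjacency: an edge lies on a path
between two leaves `a, b`, every vertex of that path is a median of `a, b` and a third leaf,
the order of these medians along the path is again expressed by median equalities, and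
adjacent vertices are consecutive in this order.
-/

end PhyloPaper

theorem SimpleGraph.Walk.IsPath.append_of_inter {V : Type*} {G : SimpleGraph V} {x y z : V}
    {p : G.Walk x y} {q : G.Walk y z} (hp : p.IsPath) (hq : q.IsPath)
    (h : ∀ v ∈ p.support, v ∈ q.support → v = y) : (p.append q).IsPath := by
  rw [Walk.isPath_def, Walk.support_append]
  refine hp.support_nodup.append (hq.support_nodup.sublist q.support.tail_sublist) ?_
  intro v hv hv'
  obtain rfl := h v hv (List.mem_of_mem_tail hv')
  have hnd := hq.support_nodup
  rw [← Walk.cons_tail_support] at hnd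
  exact (List.nodup_cons.mp hnd).1 hv'

namespace SimpleGraph.IsTree

variable {V : Type*} {G : SimpleGraph V} (hG : G.IsTree)

noncomputable def path (x y : V) : G.Walk x y := (hG.existsUnique_path x y).choose

theorem isPath_path (x y : V) : (hG.path x y).IsPath := (hG.existsUnique_path x y).choose_spec.1

theorem eq_path {x y : V} {p : G.Walk x y} (hp : p.IsPath) : p = hG.path x y :=
  (hG.existsUnique_path x y).choose_spec.2 p hp

theorem start_mem_path (x y : V) : x ∈ (hG.path x y).support := Walk.start_mem_support _

theorem end_mem_path (x y : V) : y ∈ (hG.path x y).support := Walk.end_mem_support _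

theorem mem_path_self {x v : V} : v ∈ (hG.path x x).support ↔ v = x := by
  rw [← hG.eq_path Walk.IsPath.nil]
  simp

theorem mem_path_comm {x y v : V} : v ∈ (hG.path x y).support ↔ v ∈ (hG.path y x).support := by
  rw [← hG.eq_path (hG.isPath_path x y).reverse, Walk.support_reverse, List.mem_reverse]

theorem path_of_adj {x y : V} (h : G.Adj x y) : hG.path x y = h.toWalk :=
  (hG.eq_path h.isPath_toWalk).symm

theorem path_append_path {x y v : V} (h : v ∈ (hG.path x y).support) :
    (hG.path x v).append (hG.path v y) = hG.path x y := by
  classical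
  rw [← hG.eq_path ((hG.isPath_path x y).takeUntil h),
    ← hG.eq_path ((hG.isPath_path x y).dropUntil h)]
  exact Walk.take_spec _ h

theorem mem_path_iff_of_mem {x y v w : V} (h : v ∈ (hG.path x y).support) :
    w ∈ (hG.path x y).support ↔ w ∈ (hG.path x v).support ∨ w ∈ (hG.path v y).support := by
  rw [← hG.path_append_path h, Walk.mem_support_append_iff]

theorem mem_path_of_mem_left {x y v w : V} (h : v ∈ (hG.path x y).support)
    (hw : w ∈ (hG.path x v).support) : w ∈ (hG.path x y).support :=
  (hG.mem_path_iff_of_mem h).2 (Or.inl hw)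

theorem mem_path_of_mem_right {x y v w : V} (h : v ∈ (hG.path x y).support)
    (hw : w ∈ (hG.path v y).support) : w ∈ (hG.path x y).support :=
  (hG.mem_path_iff_of_mem h).2 (Or.inr hw)

theorem eq_of_mem_path_of_mem_path {x y v w : V} (h : v ∈ (hG.path x y).support)
    (hx : w ∈ (hG.path x v).support) (hy : w ∈ (hG.path v y).support) : w = v := by
  have hp := hG.isPath_path x y
  rw [← hG.path_append_path h] at hp
  by_contra hwv
  exact hp.ne_of_mem_support_of_append hwv hx hy rfl

theorem mem_path_antisymm {x u v : V} (hu : u ∈ (hG.path x v).support)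
    (hv : v ∈ (hG.path x u).support) : u = v := by
  have h₁ := congrArg Walk.length (hG.path_append_path hu)
  have h₂ := congrArg Walk.length (hG.path_append_path hv)
  rw [Walk.length_append] at h₁ h₂
  exact Walk.eq_of_length_eq_zero (p := hG.path u v) (by omega)

theorem mem_path_or_mem_path_of_mem_path {x y z v : V} (h : v ∈ (hG.path x z).support) :
    v ∈ (hG.path x y).support ∨ v ∈ (hG.path y z).support := by
  classical
  have hv := Walk.support_bypass_subset_support _
    (hG.eq_path ((hG.path x y).append (hG.path y z)).bypass_isPath ▸ h)
  rwa [Walk.mem_support_append_iff] at hv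

theorem mem_path_iff_of_mem_path {x u v w : V} (hu : u ∈ (hG.path x v).support) :
    w ∈ (hG.path u v).support ↔
      w ∈ (hG.path x v).support ∧ u ∈ (hG.path x w).support := by
  refine ⟨fun hw => ⟨hG.mem_path_of_mem_right hu hw, ?_⟩, fun ⟨hw, hxw⟩ => ?_⟩
  · have hpath : ((hG.path x u).append (hG.path u w)).IsPath :=
      (hG.isPath_path x u).append_of_inter (hG.isPath_path u w) fun c hc hc' =>
        hG.eq_of_mem_path_of_mem_path hu hc (hG.mem_path_of_mem_left hw hc')
    rw [← hG.eq_path hpath, Walk.mem_support_append_iff]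
    exact Or.inl (Walk.end_mem_support _)
  · rcases (hG.mem_path_iff_of_mem hu).1 hw with hw | hw
    · rw [hG.mem_path_antisymm hw hxw]
      exact hG.start_mem_path u v
    · exact hw

theorem mem_path_total {x y u v : V} (hu : u ∈ (hG.path x y).support)
    (hv : v ∈ (hG.path x y).support) :
    u ∈ (hG.path x v).support ∨ v ∈ (hG.path x u).support := by
  rcases (hG.mem_path_iff_of_mem hu).1 hv with h | h
  · exact Or.inr h
  · exact Or.inl ((hG.mem_path_iff_of_mem_path hu).1 h).2

noncomputable def next (m x : V) : V := (hG.path m x).snd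

theorem next_mem_path (m x : V) : hG.next m x ∈ (hG.path m x).support :=
  Walk.getVert_mem_support _ _

theorem adj_next {m x : V} (h : m ≠ x) : G.Adj m (hG.next m x) :=
  Walk.adj_snd (Walk.not_nil_of_ne h)

theorem next_ne {m x : V} (h : m ≠ x) : hG.next m x ≠ m := (hG.adj_next h).ne'

theorem next_eq_of_adj {m x : V} (h : G.Adj m x) : hG.next m x = x := by
  rw [next, hG.path_of_adj h]
  rfl

theorem next_eq_of_mem_path {m x c : V} (hc : c ∈ (hG.path m x).support) (hcm : c ≠ m) :
    hG.next m x = hG.next m c := by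
  classical
  rw [next, next, ← hG.eq_path ((hG.isPath_path m x).takeUntil hc)]
  exact (Walk.snd_takeUntil hcm _ hc).symm

theorem mem_path_iff_next_ne {x y m : V} :
    m ∈ (hG.path x y).support ↔ m = x ∨ m = y ∨ hG.next m x ≠ hG.next m y := by
  refine ⟨fun h => ?_, fun h => ?_⟩
  · by_cases hx : m = x
    · exact Or.inl hx
    by_cases hy : m = y
    · exact Or.inr (Or.inl hy)
    refine Or.inr (Or.inr fun heq => hG.next_ne hx ?_)
    refine hG.eq_of_mem_path_of_mem_path h (hG.mem_path_comm.1 (hG.next_mem_path m x)) ?_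
    exact heq ▸ hG.next_mem_path m y
  · rcases h with rfl | rfl | hne
    · exact hG.start_mem_path m y
    · exact hG.end_mem_path x m
    have hpath : ((hG.path x m).append (hG.path m y)).IsPath := by
      refine (hG.isPath_path x m).append_of_inter (hG.isPath_path m y) fun c hc hc' => ?_
      by_contra hcm
      exact hne ((hG.next_eq_of_mem_path (hG.mem_path_comm.1 hc) hcm).trans
        (hG.next_eq_of_mem_path hc' hcm).symm)
    rw [← hG.eq_path hpath, Walk.mem_support_append_iff]
    exact Or.inl (Walk.end_mem_support _)

theorem next_eq_of_mem_path_of_next_eq {x y m v : V} (hx : x ≠ m) (hy : y ≠ m)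
    (h : hG.next m x = hG.next m y) (hv : v ∈ (hG.path x y).support) :
    v ≠ m ∧ hG.next m v = hG.next m x := by
  have hvm : v ≠ m := by
    rintro rfl
    rcases hG.mem_path_iff_next_ne.1 hv with h' | h' | h'
    exacts [hx h'.symm, hy h'.symm, h' h]
  refine ⟨hvm, ?_⟩
  rcases hG.mem_path_or_mem_path_of_mem_path (y := m) hv with hv' | hv'
  · exact (hG.next_eq_of_mem_path (hG.mem_path_comm.1 hv') hvm).symm
  · exact h ▸ (hG.next_eq_of_mem_path hv' hvm).symm

theorem exists_median (x y z : V) : ∃ m, m ∈ (hG.path x y).support ∧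
    m ∈ (hG.path y z).support ∧ m ∈ (hG.path x z).support := by
  classical
  -- the last vertex that the paths from `x` to `y` and to `z` have in common
  obtain ⟨m, hm, hmax⟩ := ((hG.path x y).support.toFinset.filter
    (· ∈ (hG.path x z).support)).exists_max_image (fun m => (hG.path x m).length)
    ⟨x, by simp [hG.start_mem_path]⟩
  simp only [Finset.mem_filter, List.mem_toFinset] at hm hmax
  refine ⟨m, hm.1, ?_, hm.2⟩
  rw [hG.mem_path_iff_next_ne]
  by_contra! h
  obtain ⟨hy, hz, hn⟩ := h
  have hny := hG.next_mem_path m y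
  have hnz : hG.next m y ∈ (hG.path m z).support := hn ▸ hG.next_mem_path m z
  have hxn := ((hG.mem_path_iff_of_mem_path hm.1).1 hny).2
  have hle := hmax _ ⟨hG.mem_path_of_mem_right hm.1 hny, hG.mem_path_of_mem_right hm.2 hnz⟩
  have hlen := congrArg Walk.length (hG.path_append_path hxn)
  rw [Walk.length_append] at hlen
  have hpos : (hG.path m (hG.next m y)).length ≠ 0 := fun h0 =>
    hG.next_ne hy (Walk.eq_of_length_eq_zero h0).symm
  omega

noncomputable def median (x y z : V) : V := (hG.exists_median x y z).choose

theorem median_mem₁₂ (x y z : V) : hG.median x y z ∈ (hG.path x y).support :=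
  (hG.exists_median x y z).choose_spec.1

theorem median_mem₂₃ (x y z : V) : hG.median x y z ∈ (hG.path y z).support :=
  (hG.exists_median x y z).choose_spec.2.1

theorem median_mem₁₃ (x y z : V) : hG.median x y z ∈ (hG.path x z).support :=
  (hG.exists_median x y z).choose_spec.2.2

theorem eq_median {x y z m : V} (h₁₂ : m ∈ (hG.path x y).support)
    (h₂₃ : m ∈ (hG.path y z).support) (h₁₃ : m ∈ (hG.path x z).support) :
    m = hG.median x y z := by
  have key : ∀ {u v c c'}, c ∈ (hG.path u v).support → c' ∈ (hG.path u c).support →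
      c' ∈ (hG.path v c).support → c' = c := fun hc h h' =>
    hG.eq_of_mem_path_of_mem_path hc h (hG.mem_path_comm.1 h')
  have h₁₂' := hG.median_mem₁₂ x y z
  have h₂₃' := hG.median_mem₂₃ x y z
  have h₁₃' := hG.median_mem₁₃ x y z
  rcases hG.mem_path_total h₁₂ h₁₂' with h | h <;>
  rcases hG.mem_path_total h₂₃ h₂₃' with h' | h' <;>
  rcases hG.mem_path_total (hG.mem_path_comm.1 h₁₃) (hG.mem_path_comm.1 h₁₃') with h'' | h''
  all_goals first
    | exact (key h₁₂ h h').symm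
    | exact (key h₁₃ h h'').symm
    | exact (key h₂₃ h' h'').symm
    | exact key h₁₂' h h'
    | exact key h₁₃' h h''
    | exact key h₂₃' h' h''

theorem median_comm₁₂ (x y z : V) : hG.median x y z = hG.median y x z :=
  hG.eq_median (hG.mem_path_comm.1 (hG.median_mem₁₂ x y z)) (hG.median_mem₁₃ x y z)
    (hG.median_mem₂₃ x y z)

theorem median_comm₂₃ (x y z : V) : hG.median x y z = hG.median x z y :=
  hG.eq_median (hG.median_mem₁₃ x y z) (hG.mem_path_comm.1 (hG.median_mem₂₃ x y z))
    (hG.median_mem₁₂ x y z)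

theorem median_eq_of_mem_path {x y m : V} (h : m ∈ (hG.path x y).support) :
    hG.median x y m = m :=
  (hG.eq_median h (hG.end_mem_path y m) (hG.end_mem_path x m)).symm

theorem median_eq_iff_next_ne {x y z m : V} (hx : x ≠ m) (hy : y ≠ m) (hz : z ≠ m) :
    hG.median x y z = m ↔ hG.next m x ≠ hG.next m y ∧ hG.next m y ≠ hG.next m z ∧
      hG.next m x ≠ hG.next m z := by
  have key : ∀ {u v}, u ≠ m → v ≠ m →
      (m ∈ (hG.path u v).support ↔ hG.next m u ≠ hG.next m v) := fun hu hv => by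
    rw [hG.mem_path_iff_next_ne]
    exact ⟨fun h => h.resolve_left hu.symm |>.resolve_left hv.symm, fun h => Or.inr (Or.inr h)⟩
  constructor
  · rintro rfl
    exact ⟨(key hx hy).1 (hG.median_mem₁₂ x y z), (key hy hz).1 (hG.median_mem₂₃ x y z),
      (key hx hz).1 (hG.median_mem₁₃ x y z)⟩
  · rintro ⟨h₁₂, h₂₃, h₁₃⟩
    exact (hG.eq_median ((key hx hy).2 h₁₂) ((key hy hz).2 h₂₃) ((key hx hz).2 h₁₃)).symm

def Precedes (x u v : V) : Prop := u ∈ (hG.path x v).support ∧ u ≠ v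

theorem median_eq_of_precedes {x p s t : V}
    (h : hG.Precedes x (hG.median x p s) (hG.median x p t)) :
    hG.median x s t = hG.median x p s := by
  set m := hG.median x p s
  set m' := hG.median x p t
  obtain ⟨hmm', hne⟩ := h
  have hmt : m ∈ (hG.path x t).support := hG.mem_path_of_mem_left (hG.median_mem₁₃ x p t) hmm'
  refine (hG.eq_median (hG.median_mem₁₃ x p s) ?_ hmt).symm
  have hp : m ≠ p := fun hmp =>
    hne (hG.mem_path_antisymm hmm' (hmp ▸ hG.median_mem₁₂ x p t))
  rw [hG.mem_path_iff_next_ne]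
  by_cases hs : m = s
  · exact Or.inl hs
  refine Or.inr (Or.inr ?_)
  have hm'p : m' ∈ (hG.path m p).support :=
    (hG.mem_path_iff_of_mem_path (hG.median_mem₁₂ x p s)).2 ⟨hG.median_mem₁₂ x p t, hmm'⟩
  have hm't : m' ∈ (hG.path m t).support :=
    (hG.mem_path_iff_of_mem_path hmt).2 ⟨hG.median_mem₁₃ x p t, hmm'⟩
  rw [hG.next_eq_of_mem_path hm't (Ne.symm hne), ← hG.next_eq_of_mem_path hm'p (Ne.symm hne)]
  rcases hG.mem_path_iff_next_ne.1 (hG.median_mem₂₃ x p s) with h | h | h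
  exacts [absurd h hp, absurd h hs, Ne.symm h]

theorem precedes_median_iff {x p s t : V} :
    hG.Precedes x (hG.median x p s) (hG.median x p t) ↔
      hG.median x s t = hG.median x p s ∧ hG.median x p s ≠ hG.median x p t := by
  refine ⟨fun h => ⟨hG.median_eq_of_precedes h, h.2⟩, fun ⟨h, hne⟩ => ⟨?_, hne⟩⟩
  rcases hG.mem_path_total (hG.median_mem₁₂ x p s) (hG.median_mem₁₂ x p t) with h' | h'
  · exact h'
  · have h'' := hG.median_eq_of_precedes ⟨h', Ne.symm hne⟩
    rw [hG.median_comm₂₃ x t s, h] at h''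
    exact absurd h'' hne

theorem not_precedes_of_adj {x u v w : V} (huv : G.Adj u v) (hu : hG.Precedes x u w)
    (hw : hG.Precedes x w v) : False := by
  have hwuv : w ∈ (hG.path u v).support :=
    (hG.mem_path_iff_of_mem_path (hG.mem_path_of_mem_left hw.1 hu.1)).2 ⟨hw.1, hu.1⟩
  rw [hG.path_of_adj huv, huv.support_toWalk] at hwuv
  simp only [List.mem_cons, List.not_mem_nil, or_false] at hwuv
  rcases hwuv with rfl | rfl
  exacts [hu.2 rfl, hw.2 rfl]

theorem disjoint_path_of_precedes {x y c d : V}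
    (h : hG.Precedes x (hG.median x y c) (hG.median x y d)) :
    ∀ v ∈ (hG.path x c).support, v ∉ (hG.path y d).support := by
  set m := hG.median x y c
  set m' := hG.median x y d
  obtain ⟨hmm', hne⟩ := h
  intro v hvc hvd
  have hmy : m ≠ y := fun hmy =>
    hne (hG.mem_path_antisymm hmm' (hmy ▸ hG.median_mem₁₂ x y d))
  have hm'y : m' ∈ (hG.path m y).support :=
    (hG.mem_path_iff_of_mem_path (hG.median_mem₁₂ x y c)).2 ⟨hG.median_mem₁₂ x y d, hmm'⟩
  have hm'd : m' ∈ (hG.path m d).support :=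
    (hG.mem_path_iff_of_mem_path (hG.mem_path_of_mem_left (hG.median_mem₁₃ x y d) hmm')).2
      ⟨hG.median_mem₁₃ x y d, hmm'⟩
  have hdm : d ≠ m := by
    rintro rfl
    exact hne (hG.mem_path_self.1 hm'd).symm
  obtain ⟨hvm, hv⟩ := hG.next_eq_of_mem_path_of_next_eq (Ne.symm hmy) hdm
    (by rw [hG.next_eq_of_mem_path hm'y (Ne.symm hne), hG.next_eq_of_mem_path hm'd (Ne.symm hne)])
    hvd
  have branch : ∀ {u}, v ∈ (hG.path m u).support → m ∈ (hG.path y u).support → False := by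
    intro u hvu hmu
    rcases hG.mem_path_iff_next_ne.1 hmu with h | h | h
    · exact hmy h
    · rw [← h] at hvu
      exact hvm (hG.mem_path_self.1 hvu)
    · exact h (hv.symm.trans (hG.next_eq_of_mem_path hvu hvm).symm)
  rcases (hG.mem_path_iff_of_mem (hG.median_mem₁₃ x y c)).1 hvc with h | h
  · exact branch (hG.mem_path_comm.1 h) (hG.mem_path_comm.1 (hG.median_mem₁₂ x y c))
  · exact branch h (hG.median_mem₂₃ x y c)

theorem disjoint_path_or_disjoint_path_of_median_ne {x y c d : V}
    (h : hG.median x y c ≠ hG.median x y d) :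
    (∀ v ∈ (hG.path x c).support, v ∉ (hG.path y d).support) ∨
      (∀ v ∈ (hG.path x d).support, v ∉ (hG.path y c).support) := by
  rcases hG.mem_path_total (hG.median_mem₁₂ x y c) (hG.median_mem₁₂ x y d) with h' | h'
  · exact Or.inl (hG.disjoint_path_of_precedes ⟨h', h⟩)
  · exact Or.inr (hG.disjoint_path_of_precedes ⟨h', Ne.symm h⟩)

end SimpleGraph.IsTree

namespace PhyloPaper

open SimpleGraph

def Rainbow {α γ : Type*} (col : α → γ) (x y z : α) : Prop :=
  col x ≠ col y ∧ col y ≠ col z ∧ col x ≠ col z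

theorem eq_of_rainbow {α β γ : Type*} (col : α → γ) (M : α → α → α → β)
    (h₁₂ : ∀ e f g, M e f g = M f e g) (h₂₃ : ∀ e f g, M e f g = M e g f)
    (hM : ∀ e f g h, Rainbow col e f g → Rainbow col e f h → M e f g = M e f h)
    {a b c a' b' c' : α} (habc : Rainbow col a b c) (habc' : Rainbow col a' b' c') :
    M a b c = M a' b' c' := by
  have same_first : ∀ {e f g f' g'}, Rainbow col e f g → Rainbow col e f' g' →
      M e f g = M e f' g' := by
    intro e f g f' g' h h'
    by_cases hf : col f' = col g
    · calc M e f g = M e g f := h₂₃ _ _ _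
        _ = M e g g' := hM _ _ _ _ (by grind [Rainbow]) (by grind [Rainbow])
        _ = M e g' g := h₂₃ _ _ _
        _ = M e g' f' := hM _ _ _ _ (by grind [Rainbow]) (by grind [Rainbow])
        _ = M e f' g' := h₂₃ _ _ _
    · calc M e f g = M e g f := h₂₃ _ _ _
        _ = M e g f' := hM _ _ _ _ (by grind [Rainbow]) (by grind [Rainbow])
        _ = M e f' g := h₂₃ _ _ _
        _ = M e f' g' := hM _ _ _ _ (by grind [Rainbow]) (by grind [Rainbow])
  have move_first : ∃ f g, Rainbow col a' f g ∧ M a b c = M a' f g := by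
    by_cases hb : col a' = col b
    · refine ⟨a, c, by grind [Rainbow], ?_⟩
      calc M a b c = M a c b := h₂₃ _ _ _
        _ = M a c a' := hM _ _ _ _ (by grind [Rainbow]) (by grind [Rainbow])
        _ = M a a' c := h₂₃ _ _ _
        _ = M a' a c := h₁₂ _ _ _
    by_cases hc : col a' = col c
    · refine ⟨a, b, by grind [Rainbow], ?_⟩
      calc M a b c = M a b a' := hM _ _ _ _ (by grind [Rainbow]) (by grind [Rainbow])
        _ = M a a' b := h₂₃ _ _ _
        _ = M a' a b := h₁₂ _ _ _
    · refine ⟨b, c, by grind [Rainbow], ?_⟩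
      calc M a b c = M b a c := h₁₂ _ _ _
        _ = M b c a := h₂₃ _ _ _
        _ = M b c a' := hM _ _ _ _ (by grind [Rainbow]) (by grind [Rainbow])
        _ = M b a' c := h₂₃ _ _ _
        _ = M a' b c := h₁₂ _ _ _
  obtain ⟨f, g, hfg, heq⟩ := move_first
  exact heq.trans (same_first hfg habc')

section Degree

variable {V : Type} {G : SimpleGraph V}

theorem two_le_deg_of_adj [Finite V] {v a b : V} (ha : G.Adj v a) (hb : G.Adj v b) (hab : a ≠ b) :
    2 ≤ deg G v := by
  rw [deg, ← Set.ncard_pair hab]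
  exact Set.ncard_le_ncard (Set.insert_subset ha (Set.singleton_subset_iff.2 hb))

theorem exists_adj_ne_ne_of_three_le_deg {v : V} (h : 3 ≤ deg G v) (a b : V) :
    ∃ c, G.Adj v c ∧ c ≠ a ∧ c ≠ b := by
  by_contra! hc
  have hsub : G.neighborSet v ⊆ {a, b} := fun c hc' =>
    (eq_or_ne c a).imp id (hc c hc')
  have := (Set.ncard_le_ncard hsub).trans (Set.ncard_insert_le a {b})
  rw [Set.ncard_singleton] at this
  exact absurd h (by unfold deg; omega)

theorem deg_eq_one_of_forall_adj_eq {v n : V} (hn : G.Adj v n) (h : ∀ t, G.Adj v t → t = n) :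
    deg G v = 1 :=
  Set.ncard_eq_one.2 ⟨n, Set.eq_singleton_iff_unique_mem.2 ⟨hn, h⟩⟩

theorem two_le_deg_of_mem_path [Finite V] (hG : G.IsTree) {x y m : V}
    (h : m ∈ (hG.path x y).support) (hx : m ≠ x) (hy : m ≠ y) : 2 ≤ deg G m :=
  two_le_deg_of_adj (hG.adj_next hx) (hG.adj_next hy)
    ((hG.mem_path_iff_next_ne.1 h).resolve_left hx |>.resolve_left hy)

theorem exists_deg_eq_one_next_eq [Finite V] (hG : G.IsTree) {v u : V} (hvu : G.Adj v u) :
    ∃ w, deg G w = 1 ∧ w ≠ v ∧ hG.next v w = u := by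
  classical
  have : Fintype V := Fintype.ofFinite V
  -- a vertex farthest from `v` among those reached through `u`
  obtain ⟨w, hw, hmax⟩ := (Finset.univ.filter fun w => w ≠ v ∧ hG.next v w = u).exists_max_image
    (fun w => (hG.path v w).length) ⟨u, by simp [hvu.ne', hG.next_eq_of_adj hvu]⟩
  simp only [Finset.mem_filter, Finset.mem_univ, true_and] at hw hmax
  refine ⟨w, deg_eq_one_of_forall_adj_eq (hG.adj_next hw.1) fun t ht => ?_, hw⟩
  by_contra hne
  have hwt : w ∈ (hG.path v t).support := by
    rw [hG.mem_path_iff_next_ne, hG.next_eq_of_adj ht]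
    exact Or.inr (Or.inr (Ne.symm hne))
  have htv : t ≠ v := by
    rintro rfl
    exact hw.1 (hG.mem_path_self.1 hwt)
  have hle := hmax t ⟨htv, (hG.next_eq_of_mem_path hwt hw.1).trans hw.2⟩
  have hlen := congrArg Walk.length (hG.path_append_path hwt)
  rw [Walk.length_append, hG.path_of_adj ht, ht.length_toWalk] at hlen
  omega

end Degree

section PhyloTree

variable {V X : Type} {G : SimpleGraph V} {leaf : X → V}

theorem displays_iff (hG : G.IsTree) {a b c d : X} :
    Displays G leaf a b c d ↔ ∀ v ∈ (hG.path (leaf a) (leaf b)).support,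
      v ∉ (hG.path (leaf c) (leaf d)).support := by
  refine ⟨fun ⟨p, hp, q, hq, h⟩ => ?_, fun h => ⟨_, hG.isPath_path _ _, _, hG.isPath_path _ _, h⟩⟩
  rw [← hG.eq_path hp, ← hG.eq_path hq]
  exact h

theorem median_eq_median_iff_not_displays (hG : G.IsTree) {a b c d : X} :
    hG.median (leaf a) (leaf b) (leaf c) = hG.median (leaf a) (leaf b) (leaf d) ↔
      ¬ Displays G leaf a c b d ∧ ¬ Displays G leaf a d b c := by
  simp only [displays_iff hG, not_forall, not_not]
  refine ⟨fun h => ⟨⟨_, hG.median_mem₁₃ _ (leaf b) _, h ▸ hG.median_mem₂₃ (leaf a) _ _⟩,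
    ⟨_, hG.median_mem₁₃ _ (leaf b) _, h ▸ hG.median_mem₂₃ (leaf a) _ _⟩⟩,
    fun ⟨⟨v, hv, hv'⟩, ⟨w, hw, hw'⟩⟩ => ?_⟩
  by_contra hne
  rcases hG.disjoint_path_or_disjoint_path_of_median_ne hne with h | h
  exacts [h v hv hv', h w hw hw']

variable [Finite V] (hT : IsPhyloTree G leaf)
include hT

theorem IsPhyloTree.eq_or_eq_of_mem_path {x y z : X}
    (h : leaf x ∈ (hT.isTree.path (leaf y) (leaf z)).support) : x = y ∨ x = z := by
  by_contra! hne
  have h2 := two_le_deg_of_mem_path hT.isTree h (fun e => hne.1 (hT.leaf_inj e))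
    (fun e => hne.2 (hT.leaf_inj e))
  rw [(hT.leaf_iff _).1 ⟨x, rfl⟩] at h2
  omega

theorem IsPhyloTree.displays_iff_of_not_P4 {a b c d : X} (h : ¬ P4 a b c d) :
    Displays G leaf a b c d ↔ a ≠ c ∧ a ≠ d ∧ b ≠ c ∧ b ≠ d := by
  set hG := hT.isTree
  rw [displays_iff hG]
  constructor
  · intro hD
    refine ⟨?_, ?_, ?_, ?_⟩ <;> rintro rfl
    · exact hD _ (hG.start_mem_path _ _) (hG.start_mem_path _ _)
    · exact hD _ (hG.start_mem_path _ _) (hG.end_mem_path _ _)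
    · exact hD _ (hG.end_mem_path _ _) (hG.start_mem_path _ _)
    · exact hD _ (hG.end_mem_path _ _) (hG.end_mem_path _ _)
  · rintro ⟨hac, had, hbc, hbd⟩ v hv hv'
    have hab : a = b ∨ c = d := by
      unfold P4 at h
      tauto
    rcases hab with rfl | rfl
    · rw [hG.mem_path_self] at hv
      subst hv
      rcases hT.eq_or_eq_of_mem_path hv' with h | h
      exacts [hac h, had h]
    · rw [hG.mem_path_self] at hv'
      subst hv'
      rcases hT.eq_or_eq_of_mem_path hv with h | h
      exacts [hac h.symm, hbc h.symm]

theorem IsPhyloTree.median_eq_leaf_iff {a b c x : X} :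
    hT.isTree.median (leaf a) (leaf b) (leaf c) = leaf x ↔
      (a = x ∧ b = x) ∨ (a = x ∧ c = x) ∨ (b = x ∧ c = x) := by
  set hG := hT.isTree
  constructor
  · intro h
    have h₁₂ := hT.eq_or_eq_of_mem_path (h ▸ hG.median_mem₁₂ _ _ _)
    have h₂₃ := hT.eq_or_eq_of_mem_path (h ▸ hG.median_mem₂₃ _ _ _)
    have h₁₃ := hT.eq_or_eq_of_mem_path (h ▸ hG.median_mem₁₃ _ _ _)
    grind
  · rintro (⟨rfl, rfl⟩ | ⟨rfl, rfl⟩ | ⟨rfl, rfl⟩)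
    · rw [hG.median_comm₂₃]
      exact hG.median_eq_of_mem_path (hG.start_mem_path _ _)
    · exact hG.median_eq_of_mem_path (hG.start_mem_path _ _)
    · rw [hG.median_comm₁₂]
      exact hG.median_eq_of_mem_path (hG.start_mem_path _ _)

theorem IsPhyloTree.exists_eq_median_of_mem_path {a b : X} {w : V}
    (hw : w ∈ (hT.isTree.path (leaf a) (leaf b)).support) :
    ∃ e, w = hT.isTree.median (leaf a) (leaf b) (leaf e) := by
  set hG := hT.isTree
  by_cases ha : w = leaf a
  · exact ⟨a, by rw [ha, hG.median_eq_of_mem_path (hG.start_mem_path _ _)]⟩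
  by_cases hb : w = leaf b
  · exact ⟨b, by rw [hb, hG.median_eq_of_mem_path (hG.end_mem_path _ _)]⟩
  have h3 : 3 ≤ deg G w := by
    have := two_le_deg_of_mem_path hG hw ha hb
    have := hT.no_deg_two w
    omega
  obtain ⟨n, hn, hna, hnb⟩ :=
    exists_adj_ne_ne_of_three_le_deg h3 (hG.next w (leaf a)) (hG.next w (leaf b))
  obtain ⟨l, hl, hlw, hnl⟩ := exists_deg_eq_one_next_eq hG hn
  obtain ⟨e, rfl⟩ := (hT.leaf_iff l).2 hl
  refine ⟨e, ((hG.median_eq_iff_next_ne (Ne.symm ha) (Ne.symm hb) hlw).2 ⟨?_, ?_, ?_⟩).symm⟩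
  · exact (hG.mem_path_iff_next_ne.1 hw).resolve_left ha |>.resolve_left hb
  · rw [hnl]
    exact Ne.symm hnb
  · rw [hnl]
    exact Ne.symm hna

theorem IsPhyloTree.exists_path_through_adj {u v : V} (huv : G.Adj u v) :
    ∃ a b : X, u ∈ (hT.isTree.path (leaf a) v).support ∧
      v ∈ (hT.isTree.path (leaf a) (leaf b)).support := by
  set hG := hT.isTree
  obtain ⟨l, hl, -, hnl⟩ := exists_deg_eq_one_next_eq hG huv.symm
  obtain ⟨a, rfl⟩ := (hT.leaf_iff l).2 hl
  have hu : u ∈ (hG.path (leaf a) v).support :=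
    hG.mem_path_comm.1 (hnl ▸ hG.next_mem_path v (leaf a))
  by_cases hv : ∃ b, leaf b = v
  · obtain ⟨b, rfl⟩ := hv
    exact ⟨a, b, hu, hG.end_mem_path _ _⟩
  obtain ⟨l', hl', -, hnl'⟩ := exists_deg_eq_one_next_eq hG huv
  obtain ⟨b, rfl⟩ := (hT.leaf_iff l').2 hl'
  refine ⟨a, b, hu, hG.mem_path_iff_next_ne.2 (Or.inr (Or.inr ?_))⟩
  rw [hnl]
  intro hub
  have h₁ : u ∈ (hG.path (leaf b) v).support :=
    hG.mem_path_comm.1 (hub ▸ hG.next_mem_path v (leaf b))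
  have h₂ : v ∈ (hG.path (leaf b) u).support :=
    hG.mem_path_comm.1 (hnl' ▸ hG.next_mem_path u (leaf b))
  exact huv.ne (hG.mem_path_antisymm h₁ h₂)

theorem IsPhyloTree.exists_median_eq [Nontrivial X] (v : V) :
    ∃ a b c : X, hT.isTree.median (leaf a) (leaf b) (leaf c) = v := by
  obtain ⟨x, y, hxy⟩ := exists_pair_ne X
  obtain ⟨w, hw⟩ : ∃ w, v ≠ w := by
    by_cases h : v = leaf x
    · exact ⟨leaf y, fun h' => hxy (hT.leaf_inj (h.symm.trans h'))⟩
    · exact ⟨leaf x, h⟩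
  obtain ⟨a, b, -, hv⟩ := hT.exists_path_through_adj (hT.isTree.adj_next hw).symm
  obtain ⟨e, he⟩ := hT.exists_eq_median_of_mem_path hv
  exact ⟨a, b, e, he.symm⟩

end PhyloTree

section TwoTrees

variable {V₁ V₂ X : Type} {G₁ : SimpleGraph V₁} {G₂ : SimpleGraph V₂}
  {leaf₁ : X → V₁} {leaf₂ : X → V₂}

theorem displays_of_iso (φ : G₁ ≃g G₂) (hφ : ∀ x, φ (leaf₁ x) = leaf₂ x) {a b c d : X}
    (h : Displays G₁ leaf₁ a b c d) : Displays G₂ leaf₂ a b c d := by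
  obtain ⟨p, hp, q, hq, hdisj⟩ := h
  refine ⟨(p.map φ.toHom).copy (hφ a) (hφ b), ?_, (q.map φ.toHom).copy (hφ c) (hφ d), ?_, ?_⟩
  · rw [Walk.isPath_copy]
    exact hp.map φ.injective
  · rw [Walk.isPath_copy]
    exact hq.map φ.injective
  · simp only [Walk.support_copy, Walk.support_map, List.mem_map]
    rintro _ ⟨v, hv, rfl⟩ ⟨w, hw, hwv⟩
    exact hdisj v hv (φ.injective hwv ▸ hw)

theorem displays_iff_of_iso (φ : G₁ ≃g G₂) (hφ : ∀ x, φ (leaf₁ x) = leaf₂ x) {a b c d : X} :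
    Displays G₁ leaf₁ a b c d ↔ Displays G₂ leaf₂ a b c d :=
  ⟨displays_of_iso φ hφ, displays_of_iso φ.symm fun x => by rw [← hφ x, RelIso.symm_apply_apply]⟩

section Trees

variable (hG₁ : G₁.IsTree) (hG₂ : G₂.IsTree)
  (hQ : ∀ a b c d : X, Displays G₁ leaf₁ a b c d ↔ Displays G₂ leaf₂ a b c d)
include hQ

theorem median_eq_median_congr {a b c d : X} :
    hG₁.median (leaf₁ a) (leaf₁ b) (leaf₁ c) = hG₁.median (leaf₁ a) (leaf₁ b) (leaf₁ d) ↔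
      hG₂.median (leaf₂ a) (leaf₂ b) (leaf₂ c) = hG₂.median (leaf₂ a) (leaf₂ b) (leaf₂ d) := by
  rw [median_eq_median_iff_not_displays, median_eq_median_iff_not_displays, hQ, hQ]

theorem precedes_congr {a b s t : X} :
    hG₁.Precedes (leaf₁ a) (hG₁.median (leaf₁ a) (leaf₁ b) (leaf₁ s))
        (hG₁.median (leaf₁ a) (leaf₁ b) (leaf₁ t)) ↔
      hG₂.Precedes (leaf₂ a) (hG₂.median (leaf₂ a) (leaf₂ b) (leaf₂ s))
        (hG₂.median (leaf₂ a) (leaf₂ b) (leaf₂ t)) := by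
  rw [hG₁.precedes_median_iff, hG₂.precedes_median_iff]
  refine and_congr ?_ (not_congr (median_eq_median_congr hG₁ hG₂ hQ))
  rw [hG₁.median_comm₂₃ _ (leaf₁ b), hG₂.median_comm₂₃ _ (leaf₂ b)]
  exact median_eq_median_congr hG₁ hG₂ hQ

end Trees

variable [Finite V₁] [Finite V₂] (hT₁ : IsPhyloTree G₁ leaf₁) (hT₂ : IsPhyloTree G₂ leaf₂)
include hT₁ hT₂

theorem displays_iff_displays_of_forall_P4
    (hQ : ∀ a b c d : X, P4 a b c d → (Displays G₁ leaf₁ a b c d ↔ Displays G₂ leaf₂ a b c d))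
    (a b c d : X) : Displays G₁ leaf₁ a b c d ↔ Displays G₂ leaf₂ a b c d := by
  by_cases h : P4 a b c d
  · exact hQ a b c d h
  · rw [hT₁.displays_iff_of_not_P4 h, hT₂.displays_iff_of_not_P4 h]

variable (hQ : ∀ a b c d : X, Displays G₁ leaf₁ a b c d ↔ Displays G₂ leaf₂ a b c d)
include hQ

theorem median_congr {a b c a' b' c' : X}
    (h : hT₁.isTree.median (leaf₁ a) (leaf₁ b) (leaf₁ c) =
      hT₁.isTree.median (leaf₁ a') (leaf₁ b') (leaf₁ c')) :
    hT₂.isTree.median (leaf₂ a) (leaf₂ b) (leaf₂ c) =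
      hT₂.isTree.median (leaf₂ a') (leaf₂ b') (leaf₂ c') := by
  set v := hT₁.isTree.median (leaf₁ a) (leaf₁ b) (leaf₁ c)
  by_cases hv : ∃ x, leaf₁ x = v
  · obtain ⟨x, hx⟩ := hv
    rw [hT₂.median_eq_leaf_iff.2 (hT₁.median_eq_leaf_iff.1 hx.symm),
      hT₂.median_eq_leaf_iff.2 (hT₁.median_eq_leaf_iff.1 (h ▸ hx).symm)]
  simp only [not_exists] at hv
  have rainbow_iff : ∀ e f g, hT₁.isTree.median (leaf₁ e) (leaf₁ f) (leaf₁ g) = v ↔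
      Rainbow (hT₁.isTree.next v ∘ leaf₁) e f g := fun e f g =>
    hT₁.isTree.median_eq_iff_next_ne (hv e) (hv f) (hv g)
  refine eq_of_rainbow _ (fun e f g => hT₂.isTree.median (leaf₂ e) (leaf₂ f) (leaf₂ g))
    (fun _ _ _ => hT₂.isTree.median_comm₁₂ _ _ _) (fun _ _ _ => hT₂.isTree.median_comm₂₃ _ _ _)
    (fun e f g k hg hk => ?_) ((rainbow_iff a b c).1 rfl) ((rainbow_iff a' b' c').1 h.symm)
  exact (median_eq_median_congr hT₁.isTree hT₂.isTree hQ).1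
    (((rainbow_iff e f g).2 hg).trans ((rainbow_iff e f k).2 hk).symm)

variable [Nontrivial X]

theorem exists_transport (v : V₁) : ∃ w : V₂, ∀ a b c : X,
    hT₁.isTree.median (leaf₁ a) (leaf₁ b) (leaf₁ c) = v →
      hT₂.isTree.median (leaf₂ a) (leaf₂ b) (leaf₂ c) = w := by
  obtain ⟨a, b, c, rfl⟩ := hT₁.exists_median_eq v
  exact ⟨_, fun a' b' c' h => median_congr hT₁ hT₂ hQ h⟩

noncomputable def transport (v : V₁) : V₂ := (exists_transport hT₁ hT₂ hQ v).choose

theorem transport_median (a b c : X) :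
    transport hT₁ hT₂ hQ (hT₁.isTree.median (leaf₁ a) (leaf₁ b) (leaf₁ c)) =
      hT₂.isTree.median (leaf₂ a) (leaf₂ b) (leaf₂ c) :=
  ((exists_transport hT₁ hT₂ hQ _).choose_spec a b c rfl).symm

theorem transport_leaf (x : X) : transport hT₁ hT₂ hQ (leaf₁ x) = leaf₂ x := by
  have h₁ := (hT₁.median_eq_leaf_iff (a := x) (b := x) (c := x) (x := x)).2 (Or.inl ⟨rfl, rfl⟩)
  have h₂ := (hT₂.median_eq_leaf_iff (a := x) (b := x) (c := x) (x := x)).2 (Or.inl ⟨rfl, rfl⟩)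
  rw [← h₁, transport_median, h₂]

theorem transport_transport (v : V₁) :
    transport hT₂ hT₁ (fun a b c d => (hQ a b c d).symm) (transport hT₁ hT₂ hQ v) = v := by
  obtain ⟨a, b, c, rfl⟩ := hT₁.exists_median_eq v
  rw [transport_median, transport_median]

theorem adj_transport {u v : V₁} (huv : G₁.Adj u v) :
    G₂.Adj (transport hT₁ hT₂ hQ u) (transport hT₁ hT₂ hQ v) := by
  set hG₁ := hT₁.isTree
  set hG₂ := hT₂.isTree
  obtain ⟨a, b, hu, hv⟩ := hT₁.exists_path_through_adj huv
  obtain ⟨s, rfl⟩ := hT₁.exists_eq_median_of_mem_path (hG₁.mem_path_of_mem_left hv hu)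
  obtain ⟨t, rfl⟩ := hT₁.exists_eq_median_of_mem_path hv
  rw [transport_median, transport_median]
  have hst := (precedes_congr hG₁ hG₂ hQ).1 ⟨hu, huv.ne⟩
  by_contra hnadj
  set w := hG₂.next (hG₂.median (leaf₂ a) (leaf₂ b) (leaf₂ s))
    (hG₂.median (leaf₂ a) (leaf₂ b) (leaf₂ t))
  obtain ⟨hwt, hsw⟩ := (hG₂.mem_path_iff_of_mem_path hst.1).1 (hG₂.next_mem_path _ _)
  obtain ⟨e, he⟩ := hT₂.exists_eq_median_of_mem_path
    (hG₂.mem_path_of_mem_left (hG₂.median_mem₁₂ _ _ _) hwt)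
  have hse : hG₂.Precedes (leaf₂ a) (hG₂.median (leaf₂ a) (leaf₂ b) (leaf₂ s))
      (hG₂.median (leaf₂ a) (leaf₂ b) (leaf₂ e)) :=
    he ▸ ⟨hsw, (hG₂.next_ne hst.2).symm⟩
  have het : hG₂.Precedes (leaf₂ a) (hG₂.median (leaf₂ a) (leaf₂ b) (leaf₂ e))
      (hG₂.median (leaf₂ a) (leaf₂ b) (leaf₂ t)) :=
    he ▸ ⟨hwt, fun h => hnadj (h ▸ hG₂.adj_next hst.2)⟩
  exact hG₁.not_precedes_of_adj huv ((precedes_congr hG₁ hG₂ hQ).2 hse)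
    ((precedes_congr hG₁ hG₂ hQ).2 het)

noncomputable def isoOfDisplays : G₁ ≃g G₂ where
  toFun := transport hT₁ hT₂ hQ
  invFun := transport hT₂ hT₁ fun a b c d => (hQ a b c d).symm
  left_inv := transport_transport hT₁ hT₂ hQ
  right_inv := transport_transport hT₂ hT₁ fun a b c d => (hQ a b c d).symm
  map_rel_iff' {u v} := by
    simp only [Equiv.coe_fn_mk]
    refine ⟨fun h => ?_, adj_transport hT₁ hT₂ hQ⟩
    simpa only [transport_transport] using
      adj_transport hT₂ hT₁ (fun a b c d => (hQ a b c d).symm) h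

end TwoTrees

theorem tree_determined_by_quartets_general
    {V₁ V₂ X : Type} [Fintype V₁] [Fintype V₂] [Fintype X]
    (hX : 3 ≤ Fintype.card X)
    (G₁ : SimpleGraph V₁) (G₂ : SimpleGraph V₂) (leaf₁ : X → V₁) (leaf₂ : X → V₂)
    (hT₁ : IsPhyloTree G₁ leaf₁) (hT₂ : IsPhyloTree G₂ leaf₂) :
    (∀ a b c d : X, P4 a b c d →
        (Displays G₁ leaf₁ a b c d ↔ Displays G₂ leaf₂ a b c d)) ↔
    ∃ φ : G₁ ≃g G₂, ∀ x : X, φ (leaf₁ x) = leaf₂ x := by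
  have : Nontrivial X := Fintype.one_lt_card_iff_nontrivial.1 (by omega)
  refine ⟨fun hQ => ?_, fun ⟨φ, hφ⟩ a b c d _ => displays_iff_of_iso φ hφ⟩
  have hQ' := displays_iff_displays_of_forall_P4 hT₁ hT₂ hQ
  exact ⟨isoOfDisplays hT₁ hT₂ hQ', transport_leaf hT₁ hT₂ hQ'⟩

/-- Two phylogenetic trees on `X` display the same quartets iff there
is a graph isomorphism between them fixing every element of `X`. -/
theorem tree_determined_by_quartets
    {V₁ V₂ X : Type} [Fintype V₁] [Fintype V₂] [Fintype X] [DecidableEq X]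
    (hX : 3 ≤ Fintype.card X)
    (G₁ : SimpleGraph V₁) (G₂ : SimpleGraph V₂) (leaf₁ : X → V₁) (leaf₂ : X → V₂)
    (hT₁ : IsPhyloTree G₁ leaf₁) (hT₂ : IsPhyloTree G₂ leaf₂) :
    (∀ a b c d : X, P4 a b c d →
        (Displays G₁ leaf₁ a b c d ↔ Displays G₂ leaf₂ a b c d)) ↔
    ∃ φ : G₁ ≃g G₂, ∀ x : X, φ (leaf₁ x) = leaf₂ x :=
  tree_determined_by_quartets_general hX G₁ G₂ leaf₁ leaf₂ hT₁ hT₂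

end PhyloPaper
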